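/- arXiv:2306.05780 — 2 statements merged into one kernel-verified Lean document; each statement's English description precedes it below -/
import Mathlib

section
/- Let d ∈ ℕ, d ≥ 1, let p ∈ ℕ, p ≥ 1, let K ⊆ ℝ^{d+1} be open with (x_K,t_K) ∈ K, and let V ∈ C^{max(p−2,0)}(K;ℝ). Suppose ψ ∈ C^p(K;ℂ) satisfies Sψ = 0 everywhere on K, where Sφ := i∂_tφ + ½Δ_xφ − Vφ. Then the Taylor polynomial q := T^{p+1}_{(x_K,t_K)}ψ of order p+1 centered at (x_K,t_K) satisfies D^j(Sq)(x_K,t_K) = 0 for every multi-index j with |j| ≤ p−2; that is, T^{p+1}_{(x_K,t_K)}ψ belongs to the quasi-Trefftz space QT^p(K). -/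
open scoped BigOperators
open MeasureTheory

noncomputable section

/-- Space–time points `(x, t)` with `x ∈ ℝ^d`, `t ∈ ℝ`. -/
abbrev Pt (d : ℕ) : Type := (Fin d → ℝ) × ℝ

/-- Multi-indices `j = (j_x, j_t)`. -/
abbrev MI (d : ℕ) : Type := (Fin d → ℕ) × ℕ

/-- `|j|`, the total order of a multi-index. -/
def MI.deg {d : ℕ} (j : MI d) : ℕ := (∑ ℓ, j.1 ℓ) + j.2

/-- `j!`. -/
def MI.fact {d : ℕ} (j : MI d) : ℕ := (∏ ℓ, Nat.factorial (j.1 ℓ)) * Nat.factorial j.2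

/-- componentwise difference of multi-indices. -/
def MI.sub {d : ℕ} (j z : MI d) : MI d := (fun ℓ => j.1 ℓ - z.1 ℓ, j.2 - z.2)

/-- add `k` to the spatial component `ℓ` of a multi-index. -/
def MI.addX {d : ℕ} (j : MI d) (ℓ : Fin d) (k : ℕ) : MI d :=
  (fun m => j.1 m + if m = ℓ then k else 0, j.2)

/-- spatial canonical basis vector in `ℝ^d`. -/
def eVecd (d : ℕ) (ℓ : Fin d) : Fin d → ℝ := fun m => if m = ℓ then 1 else 0

/-- spatial unit direction in space–time. -/
def eDir (d : ℕ) (ℓ : Fin d) : Pt d := (eVecd d ℓ, 0)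

/-- time unit direction in space–time. -/
def tDir (d : ℕ) : Pt d := (0, 1)

/-- directional (partial) derivative. -/
def pd {d : ℕ} (v : Pt d) (f : Pt d → ℂ) : Pt d → ℂ := fun z => fderiv ℝ f z v

/-- the multi-index partial derivative `D^j = ∂_{x_1}^{j_1} ⋯ ∂_{x_d}^{j_d} ∂_t^{j_t}`. -/
def Dmi {d : ℕ} (j : MI d) (f : Pt d → ℂ) : Pt d → ℂ :=
  (List.finRange d).foldr (fun ℓ g => (pd (eDir d ℓ))^[j.1 ℓ] g) ((pd (tDir d))^[j.2] f)

/-- the Schrödinger operator `S f = i ∂_t f + ½ Δ_x f − V f`. -/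
def Sop {d : ℕ} (V : Pt d → ℝ) (f : Pt d → ℂ) : Pt d → ℂ := fun z =>
  Complex.I * pd (tDir d) f z
    + (1 / 2) * ∑ ℓ : Fin d, pd (eDir d ℓ) (pd (eDir d ℓ) f) z
    - (V z : ℂ) * f z

/-- all multi-indices with every component `≤ p`. -/
def MIall (d p : ℕ) : Finset (MI d) :=
  (Finset.univ : Finset ((Fin d → Fin (p + 1)) × Fin (p + 1))).image
    (fun j => ((fun ℓ => (j.1 ℓ : ℕ)), (j.2 : ℕ)))

/-- multi-indices with `|j| ≤ p`. -/
def MIle (d p : ℕ) : Finset (MI d) := (MIall d p).filter (fun j => MI.deg j ≤ p)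

/-- multi-indices with `|j| < m`. -/
def MIlt (d m : ℕ) : Finset (MI d) := (MIall d m).filter (fun j => MI.deg j < m)

/-- multi-indices with `|j| = m`. -/
def MIeq (d m : ℕ) : Finset (MI d) := (MIall d m).filter (fun j => MI.deg j = m)

/-- multi-indices `z ≤ j` (componentwise). -/
def MIbelow {d : ℕ} (j : MI d) : Finset (MI d) :=
  (MIall d (MI.deg j)).filter (fun z => (∀ ℓ, z.1 ℓ ≤ j.1 ℓ) ∧ z.2 ≤ j.2)

/-- monomial of multi-index `j`, centered at `c`, scaled by `h`. -/
def monoC {d : ℕ} (c : Pt d) (h : ℝ) (j : MI d) : Pt d → ℂ := fun z =>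
  (∏ ℓ, (((z.1 ℓ - c.1 ℓ) / h : ℝ) : ℂ) ^ j.1 ℓ) * (((z.2 - c.2) / h : ℝ) : ℂ) ^ j.2

/-- `ℙ^p`: polynomial functions `ℝ^{d+1} → ℂ` of total degree `≤ p`. -/
def PolySet (d p : ℕ) : Set (Pt d → ℂ) :=
  {q | ∃ C : MI d → ℂ, ∀ z, q z = ∑ j ∈ MIle d p, C j * monoC ((0 : Fin d → ℝ), (0 : ℝ)) 1 j z}

/-- the quasi-Trefftz space `QT^p(K)` for the potential `V`, centered at `c`:
polynomials of degree `≤ p` with `D^j(Sq)(c) = 0` for all `|j| ≤ p − 2`. -/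
def QTset (d p : ℕ) (V : Pt d → ℝ) (c : Pt d) : Set (Pt d → ℂ) :=
  {q | q ∈ PolySet d p ∧ ∀ j : MI d, MI.deg j + 2 ≤ p → Dmi j (Sop V q) c = 0}

/-- Taylor polynomial of order `m` (degree `m − 1`) centered at `c`. -/
def TaylorP {d : ℕ} (m : ℕ) (c : Pt d) (φ : Pt d → ℂ) : Pt d → ℂ := fun z =>
  ∑ j ∈ MIlt d m, ((MI.fact j : ℂ))⁻¹ * Dmi j φ c * monoC c 1 j z

/-- Euclidean distance on `ℝ^{d+1} = ℝ^d × ℝ`. -/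
def eDist {d : ℕ} (z w : Pt d) : ℝ :=
  Real.sqrt ((∑ ℓ, (z.1 ℓ - w.1 ℓ) ^ 2) + (z.2 - w.2) ^ 2)

/-!
Write `q` for the Taylor polynomial and `r = q - ψ`. Because `q` matches all derivatives of `ψ`
at the centre up to order `p` (mixed partials may be taken in any order, by Schwarz), `r` is
flat to order `p` there. Since `Sψ = 0`, `Sq = Sr` on `K`, and `Sr` is built from derivatives of
`r` of order at most two and from `V r`; by the Leibniz rule all of these are flat to order
`p - 2`. Finally `q ∈ ℙ^p` because `q` is the evaluation of an `MvPolynomial` of total degree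
`≤ p`, whose coefficients give its expansion in monomials.
-/

section

variable {d : ℕ}

def pdList : List (Pt d) → (Pt d → ℂ) → Pt d → ℂ
  | [], f => f
  | v :: vs, f => pdList vs (pd v f)

@[simp] lemma pdList_nil (f : Pt d → ℂ) : pdList [] f = f := rfl

@[simp] lemma pdList_cons (v : Pt d) (vs : List (Pt d)) (f : Pt d → ℂ) :
    pdList (v :: vs) f = pdList vs (pd v f) := rfl

lemma pdList_append (vs ws : List (Pt d)) (f : Pt d → ℂ) :
    pdList (vs ++ ws) f = pdList ws (pdList vs f) := by
  induction vs generalizing f with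
  | nil => rfl
  | cons v vs ih => exact ih _

lemma pdList_replicate (v : Pt d) (n : ℕ) (f : Pt d → ℂ) :
    pdList (List.replicate n v) f = (pd v)^[n] f := by
  induction n generalizing f with
  | zero => rfl
  | succ n ih => rw [List.replicate_succ, pdList_cons, ih, Function.iterate_succ_apply]

section Pointwise

variable {f g : Pt d → ℂ} {z : Pt d} (v : Pt d)

lemma pd_add (hf : DifferentiableAt ℝ f z) (hg : DifferentiableAt ℝ g z) :
    pd v (fun z => f z + g z) z = pd v f z + pd v g z := by
  simp [pd, fderiv_fun_add hf hg]

lemma pd_sub (hf : DifferentiableAt ℝ f z) (hg : DifferentiableAt ℝ g z) :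
    pd v (fun z => f z - g z) z = pd v f z - pd v g z := by
  simp [pd, fderiv_fun_sub hf hg]

lemma pd_const_mul (a : ℂ) (hf : DifferentiableAt ℝ f z) :
    pd v (fun z => a * f z) z = a * pd v f z := by
  simp [pd, fderiv_const_mul hf]

lemma pd_mul (hf : DifferentiableAt ℝ f z) (hg : DifferentiableAt ℝ g z) :
    pd v (fun z => g z * f z) z = pd v g z * f z + g z * pd v f z := by
  simp [pd, fderiv_fun_mul hg hf]
  ring

lemma pd_sum {ι : Type*} (s : Finset ι) {F : ι → Pt d → ℂ}
    (hF : ∀ i ∈ s, DifferentiableAt ℝ (F i) z) :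
    pd v (fun z => ∑ i ∈ s, F i z) z = ∑ i ∈ s, pd v (F i) z := by
  simp [pd, fderiv_fun_sum hF]

end Pointwise

section OpenSet

variable {U : Set (Pt d)} {f g : Pt d → ℂ}

lemma pdList_congr_on (hU : IsOpen U) (h : ∀ z ∈ U, f z = g z) (vs : List (Pt d)) :
    ∀ z ∈ U, pdList vs f z = pdList vs g z := by
  induction vs generalizing f g with
  | nil => exact h
  | cons v vs ih =>
    refine ih fun z hz => ?_
    simp [pd, (Filter.eventuallyEq_of_mem (hU.mem_nhds hz) h).fderiv_eq]

lemma ContDiffOn.pd {n : ℕ} (hf : ContDiffOn ℝ (n + 1 : ℕ) f U) (hU : IsOpen U) (v : Pt d) :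
    ContDiffOn ℝ n (pd v f) U :=
  (hf.fderiv_of_isOpen hU (by exact_mod_cast le_rfl)).clm_apply contDiffOn_const

lemma ContDiffOn.differentiableAt_of_isOpen {n : ℕ} (hf : ContDiffOn ℝ (n + 1 : ℕ) f U)
    (hU : IsOpen U) {z : Pt d} (hz : z ∈ U) : DifferentiableAt ℝ f z :=
  (hf.differentiableOn (by simp)).differentiableAt (hU.mem_nhds hz)

lemma pdList_add_on (hU : IsOpen U) (vs : List (Pt d)) (hf : ContDiffOn ℝ vs.length f U)
    (hg : ContDiffOn ℝ vs.length g U) :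
    ∀ z ∈ U, pdList vs (fun z => f z + g z) z = pdList vs f z + pdList vs g z := by
  induction vs generalizing f g with
  | nil => exact fun _ _ => rfl
  | cons v vs ih =>
    intro z hz
    rw [pdList_cons, pdList_congr_on hU (fun w hw => pd_add v
      (hf.differentiableAt_of_isOpen hU hw) (hg.differentiableAt_of_isOpen hU hw)) vs z hz]
    exact ih (hf.pd hU v) (hg.pd hU v) z hz

lemma pdList_sub_on (hU : IsOpen U) (vs : List (Pt d)) (hf : ContDiffOn ℝ vs.length f U)
    (hg : ContDiffOn ℝ vs.length g U) :
    ∀ z ∈ U, pdList vs (fun z => f z - g z) z = pdList vs f z - pdList vs g z := by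
  induction vs generalizing f g with
  | nil => exact fun _ _ => rfl
  | cons v vs ih =>
    intro z hz
    rw [pdList_cons, pdList_congr_on hU (fun w hw => pd_sub v
      (hf.differentiableAt_of_isOpen hU hw) (hg.differentiableAt_of_isOpen hU hw)) vs z hz]
    exact ih (hf.pd hU v) (hg.pd hU v) z hz

lemma pdList_const_mul_on (hU : IsOpen U) (vs : List (Pt d)) (a : ℂ)
    (hf : ContDiffOn ℝ vs.length f U) :
    ∀ z ∈ U, pdList vs (fun z => a * f z) z = a * pdList vs f z := by
  induction vs generalizing f with
  | nil => exact fun _ _ => rfl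
  | cons v vs ih =>
    intro z hz
    rw [pdList_cons, pdList_congr_on hU
      (fun w hw => pd_const_mul v a (hf.differentiableAt_of_isOpen hU hw)) vs z hz]
    exact ih (hf.pd hU v) z hz

lemma pdList_sum_on {ι : Type*} (hU : IsOpen U) (vs : List (Pt d)) (s : Finset ι)
    {F : ι → Pt d → ℂ} (hF : ∀ i ∈ s, ContDiffOn ℝ vs.length (F i) U) :
    ∀ z ∈ U, pdList vs (fun z => ∑ i ∈ s, F i z) z = ∑ i ∈ s, pdList vs (F i) z := by
  induction vs generalizing F with
  | nil => exact fun _ _ => rfl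
  | cons v vs ih =>
    intro z hz
    rw [pdList_cons, pdList_congr_on hU
      (fun w hw => pd_sum v s fun i hi => (hF i hi).differentiableAt_of_isOpen hU hw) vs z hz]
    exact ih (fun i hi => (hF i hi).pd hU v) z hz

lemma pd_pd_comm_on (hU : IsOpen U) (hf : ContDiffOn ℝ 2 f U) (v w : Pt d) :
    ∀ z ∈ U, pd v (pd w f) z = pd w (pd v f) z := by
  intro z hz
  have hat : ContDiffAt ℝ 2 f z := hf.contDiffAt (hU.mem_nhds hz)
  have hdf : DifferentiableAt ℝ (fderiv ℝ f) z :=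
    (hat.fderiv_right (m := 1) le_rfl).differentiableAt one_ne_zero
  have hsnd : ∀ a b : Pt d, pd a (pd b f) z = fderiv ℝ (fderiv ℝ f) z a b := fun a b => by
    change fderiv ℝ (fun y => fderiv ℝ f y b) z a = _
    simp [fderiv_clm_apply hdf (differentiableAt_const b)]
  rw [hsnd, hsnd, hat.isSymmSndFDerivAt (by simp) w v]

lemma pdList_perm_on (hU : IsOpen U) {vs ws : List (Pt d)} (hp : vs.Perm ws)
    (hf : ContDiffOn ℝ vs.length f U) : ∀ z ∈ U, pdList vs f z = pdList ws f z := by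
  induction hp generalizing f with
  | nil => exact fun _ _ => rfl
  | cons v _ ih => exact ih (hf.pd hU v)
  | swap v w vs =>
    have h2 : ContDiffOn ℝ 2 f U :=
      hf.of_le (by exact_mod_cast (by simp : 2 ≤ (w :: v :: vs).length))
    exact pdList_congr_on hU (pd_pd_comm_on hU h2 v w) vs
  | trans h₁₂ _ ih₁₂ ih₂₃ =>
    intro z hz
    rw [ih₁₂ hf z hz, ih₂₃ (h₁₂.length_eq ▸ hf) z hz]

end OpenSet

-- Space–time coordinates are indexed by `Option (Fin d)`: `none` is time, `some ℓ` is `x_ℓ`.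
def dirv : Option (Fin d) → Pt d
  | none => tDir d
  | some ℓ => eDir d ℓ

def coord : Option (Fin d) → Pt d →L[ℝ] ℝ
  | none => ContinuousLinearMap.snd ℝ _ ℝ
  | some ℓ => (ContinuousLinearMap.proj ℓ).comp (ContinuousLinearMap.fst ℝ _ ℝ)

lemma coord_dirv (o o' : Option (Fin d)) : coord o (dirv o') = if o = o' then 1 else 0 := by
  cases o <;> cases o' <;> simp [coord, dirv, eDir, tDir, eVecd, eq_comm]

def MI.toFinsupp : MI d ≃ (Option (Fin d) →₀ ℕ) :=
  ((Equiv.prodComm _ _).trans Equiv.piOptionEquivProd.symm).trans Finsupp.equivFunOnFinite.symm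

@[simp] lemma MI.toFinsupp_none (j : MI d) : MI.toFinsupp j none = j.2 := rfl

@[simp] lemma MI.toFinsupp_some (j : MI d) (ℓ : Fin d) : MI.toFinsupp j (some ℓ) = j.1 ℓ :=
  rfl

lemma MI.deg_eq_sum (j : MI d) : MI.deg j = ∑ o, MI.toFinsupp j o := by
  simp [MI.deg, Fintype.sum_option, add_comm]

lemma MI.fact_eq_prod (j : MI d) : MI.fact j = ∏ o, (MI.toFinsupp j o).factorial := by
  simp [MI.fact, Fintype.prod_option, mul_comm]

def MI.ofList (L : List (Option (Fin d))) : MI d := MI.toFinsupp.symm (Multiset.toFinsupp L)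

lemma MI.deg_ofList (L : List (Option (Fin d))) : MI.deg (MI.ofList L) = L.length := by
  rw [MI.deg_eq_sum, MI.ofList, Equiv.apply_symm_apply]
  simpa [Multiset.toFinsupp_apply] using
    Multiset.sum_count_eq_card (s := .univ) (m := (L : Multiset (Option (Fin d)))) (by simp)

def MI.toList (j : MI d) : List (Option (Fin d)) :=
  List.replicate j.2 none ++
    (List.finRange d).reverse.flatMap fun ℓ => List.replicate (j.1 ℓ) (some ℓ)

lemma MI.ofList_toList (j : MI d) : MI.ofList (MI.toList j) = j := by
  rw [MI.ofList, Equiv.symm_apply_eq]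
  ext (_ | ℓ) <;> simp [MI.toList, Multiset.toFinsupp_apply, List.count_replicate,
    List.count_flatMap, Function.comp_def, ← Fin.sum_univ_def]

lemma MI.length_toList (j : MI d) : (MI.toList j).length = MI.deg j := by
  conv_rhs => rw [← MI.ofList_toList j, MI.deg_ofList]

lemma MI.perm_toList_ofList (L : List (Option (Fin d))) : L.Perm (MI.toList (MI.ofList L)) := by
  rw [← Multiset.coe_eq_coe, ← Multiset.toFinsupp.injective.eq_iff,
    ← MI.toFinsupp.symm.injective.eq_iff]
  exact (MI.ofList_toList _).symm

lemma Dmi_eq_pdList (j : MI d) (f : Pt d → ℂ) :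
    Dmi j f = pdList ((MI.toList j).map dirv) f := by
  have key : ∀ (l : List (Fin d)) (g : Pt d → ℂ), l.foldr (fun ℓ g => (pd (eDir d ℓ))^[j.1 ℓ] g) g =
      pdList ((l.reverse.flatMap fun ℓ => List.replicate (j.1 ℓ) (some ℓ)).map dirv) g := by
    intro l
    induction l with
    | nil => exact fun _ => rfl
    | cons a l ih =>
      intro g
      simp [ih, List.map_flatMap, List.map_replicate, pdList_append, pdList_replicate, dirv]
  simp [Dmi, key, MI.toList, pdList_append, pdList_replicate, List.map_replicate, dirv]

lemma Dmi_congr_on {U : Set (Pt d)} (hU : IsOpen U) {f g : Pt d → ℂ}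
    (h : ∀ z ∈ U, f z = g z) (j : MI d) : ∀ z ∈ U, Dmi j f z = Dmi j g z := by
  simpa only [Dmi_eq_pdList] using pdList_congr_on hU h _

lemma pdList_eq_Dmi_ofList {U : Set (Pt d)} (hU : IsOpen U) {f : Pt d → ℂ}
    (L : List (Option (Fin d))) (hf : ContDiffOn ℝ L.length f U) {c : Pt d} (hc : c ∈ U) :
    pdList (L.map dirv) f c = Dmi (MI.ofList L) f c := by
  rw [Dmi_eq_pdList]
  exact pdList_perm_on hU ((MI.perm_toList_ofList L).map dirv) (by simpa using hf) c hc

def shiftedMono (c : Pt d) (k : Option (Fin d) →₀ ℕ) (z : Pt d) : ℂ :=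
  ∏ o, ((coord o z - coord o c : ℝ) : ℂ) ^ k o

lemma monoC_one_eq_shiftedMono (c : Pt d) (j : MI d) :
    monoC c 1 j = shiftedMono c (MI.toFinsupp j) := by
  funext z
  simp [monoC, shiftedMono, Fintype.prod_option, coord, mul_comm]

lemma contDiff_shiftedMono (c : Pt d) (k : Option (Fin d) →₀ ℕ) {n : WithTop ℕ∞} :
    ContDiff ℝ n (shiftedMono c k) :=
  contDiff_prod fun o _ =>
    (Complex.ofRealCLM.contDiff.comp ((coord o).contDiff.sub contDiff_const)).pow _

lemma hasFDerivAt_coord_sub_pow (c z : Pt d) (o : Option (Fin d)) (n : ℕ) :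
    HasFDerivAt (fun z => ((coord o z - coord o c : ℝ) : ℂ) ^ n)
      (((n : ℂ) * ((coord o z - coord o c : ℝ) : ℂ) ^ (n - 1)) •
        Complex.ofRealCLM.comp (coord o)) z := by
  have h : HasFDerivAt (fun z => ((coord o z - coord o c : ℝ) : ℂ))
      (Complex.ofRealCLM.comp (coord o)) z := by
    simpa using ((Complex.ofRealCLM.comp (coord o)).hasFDerivAt (x := z)).sub_const
      ((coord o c : ℝ) : ℂ)
  exact (hasDerivAt_pow n _).comp_hasFDerivAt z h

lemma prod_tsub_single_apply {ι M : Type*} [Fintype ι] [DecidableEq ι] [CommMonoid M]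
    (k : ι →₀ ℕ) (o : ι) (g : ι → ℕ → M) :
    ∏ i, g i ((k - Finsupp.single o 1 : ι →₀ ℕ) i) =
      g o (k o - 1) * ∏ i ∈ Finset.univ.erase o, g i (k i) := by
  rw [← Finset.mul_prod_erase _ _ (Finset.mem_univ o)]
  congr 1
  · simp
  · exact Finset.prod_congr rfl fun i hi => by simp [Ne.symm (Finset.ne_of_mem_erase hi)]

lemma pd_shiftedMono (c : Pt d) (k : Option (Fin d) →₀ ℕ) (o : Option (Fin d)) :
    pd (dirv o) (shiftedMono c k) =
      fun z => k o * shiftedMono c (k - Finsupp.single o 1) z := by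
  funext z
  have h := HasFDerivAt.finsetProd (u := .univ) fun i _ => hasFDerivAt_coord_sub_pow c z i (k i)
  change fderiv ℝ (fun x => ∏ i, _) z (dirv o) = _
  rw [h.fderiv, FunLike.coe_sum, Finset.sum_apply,
    Finset.sum_eq_single o (fun i _ hi => by simp [coord_dirv, hi]) (by simp), shiftedMono,
    prod_tsub_single_apply k o fun i n => ((coord i z - coord i c : ℝ) : ℂ) ^ n]
  simp [coord_dirv]
  ring

lemma shiftedMono_self (c : Pt d) (k : Option (Fin d) →₀ ℕ) :
    shiftedMono c k c = if k = 0 then 1 else 0 := by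
  split_ifs with hk
  · simp [shiftedMono, hk]
  · obtain ⟨o, ho⟩ : ∃ o, k o ≠ 0 := by simpa [Finsupp.ext_iff] using hk
    exact Finset.prod_eq_zero (Finset.mem_univ o) (by simp [ho])

lemma prod_factorial_tsub_single {ι : Type*} [Fintype ι] [DecidableEq ι] (k : ι →₀ ℕ) {o : ι}
    (ho : k o ≠ 0) :
    k o * ∏ i, ((k - Finsupp.single o 1 : ι →₀ ℕ) i).factorial = ∏ i, (k i).factorial := by
  rw [prod_tsub_single_apply k o fun _ n => n.factorial, ← mul_assoc, Nat.mul_factorial_pred ho,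
    Finset.mul_prod_erase _ (fun i => (k i).factorial) (Finset.mem_univ o)]

lemma pdList_shiftedMono_self (c : Pt d) (L : List (Option (Fin d)))
    (k : Option (Fin d) →₀ ℕ) :
    pdList (L.map dirv) (shiftedMono c k) c =
      if Multiset.toFinsupp (L : Multiset (Option (Fin d))) = k then ∏ o, ((k o).factorial : ℂ)
      else 0 := by
  induction L generalizing k with
  | nil =>
    simp only [List.map_nil, pdList_nil, shiftedMono_self, Multiset.coe_nil, map_zero, eq_comm]
    split_ifs with hk <;> simp [hk]
  | cons o L ih =>
    rw [List.map_cons, pdList_cons, pd_shiftedMono, pdList_const_mul_on isOpen_univ _ _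
      (contDiff_shiftedMono c _).contDiffOn c trivial, ih]
    have hcons : Multiset.toFinsupp ((o :: L : List _) : Multiset (Option (Fin d))) =
        Finsupp.single o 1 + Multiset.toFinsupp (L : Multiset (Option (Fin d))) := by
      rw [← Multiset.cons_coe, ← Multiset.singleton_add, Multiset.toFinsupp_add,
        Multiset.toFinsupp_singleton]
    by_cases ho : k o = 0
    · have hne : Finsupp.single o 1 + Multiset.toFinsupp (L : Multiset (Option (Fin d))) ≠ k :=
        fun h => by simpa [ho] using congrArg (· o) h
      simp [ho, hcons, hne]
    · have hle : Finsupp.single o 1 ≤ k := Finsupp.single_le_iff.2 (Nat.one_le_iff_ne_zero.2 ho)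
      simp only [hcons, add_comm _ (Multiset.toFinsupp _), ← eq_tsub_iff_add_eq_of_le hle]
      split_ifs
      · exact_mod_cast prod_factorial_tsub_single k ho
      · simp

lemma mem_MIall_of_deg_le {p : ℕ} {j : MI d} (h : MI.deg j ≤ p) : j ∈ MIall d p := by
  have hle : ∀ o, MI.toFinsupp j o ≤ p := fun o => le_trans
    (MI.deg_eq_sum j ▸ Finset.single_le_sum (fun _ _ => Nat.zero_le _) (Finset.mem_univ o)) h
  exact Finset.mem_image.2 ⟨(fun ℓ => ⟨j.1 ℓ, Nat.lt_succ_of_le (hle (some ℓ))⟩,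
    ⟨j.2, Nat.lt_succ_of_le (hle none)⟩), Finset.mem_univ _, rfl⟩

lemma mem_MIle {p : ℕ} {j : MI d} : j ∈ MIle d p ↔ MI.deg j ≤ p :=
  ⟨fun h => (Finset.mem_filter.1 h).2,
    fun h => Finset.mem_filter.2 ⟨mem_MIall_of_deg_le h, h⟩⟩

lemma mem_MIlt {m : ℕ} {j : MI d} : j ∈ MIlt d m ↔ MI.deg j < m :=
  ⟨fun h => (Finset.mem_filter.1 h).2,
    fun h => Finset.mem_filter.2 ⟨mem_MIall_of_deg_le h.le, h⟩⟩

lemma contDiff_monoC (c : Pt d) (j : MI d) {n : WithTop ℕ∞} : ContDiff ℝ n (monoC c 1 j) :=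
  monoC_one_eq_shiftedMono c j ▸ contDiff_shiftedMono c _

lemma pdList_monoC_self (c : Pt d) (L : List (Option (Fin d))) (j : MI d) :
    pdList (L.map dirv) (monoC c 1 j) c = if MI.ofList L = j then (MI.fact j : ℂ) else 0 := by
  simp only [monoC_one_eq_shiftedMono, pdList_shiftedMono_self, MI.ofList, Equiv.symm_apply_eq,
    MI.fact_eq_prod, Nat.cast_prod]

lemma contDiff_taylorP (m : ℕ) (c : Pt d) (φ : Pt d → ℂ) {n : WithTop ℕ∞} :
    ContDiff ℝ n (TaylorP m c φ) :=
  ContDiff.sum fun j _ => contDiff_const.mul (contDiff_monoC c j)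

lemma pdList_taylorP_self {m : ℕ} (c : Pt d) (φ : Pt d → ℂ) {L : List (Option (Fin d))}
    (hL : L.length < m) : pdList (L.map dirv) (TaylorP m c φ) c = Dmi (MI.ofList L) φ c := by
  have hterm : ∀ j ∈ MIlt d m, pdList (L.map dirv)
      (fun z => (MI.fact j : ℂ)⁻¹ * Dmi j φ c * monoC c 1 j z) c =
        if MI.ofList L = j then (MI.fact j : ℂ)⁻¹ * Dmi j φ c * MI.fact j else 0 := by
    intro j _
    rw [pdList_const_mul_on isOpen_univ _ _ (contDiff_monoC c j).contDiffOn c trivial,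
      pdList_monoC_self]
    split_ifs <;> simp
  have hfact : (MI.fact (MI.ofList L) : ℂ) ≠ 0 := by
    simp [MI.fact_eq_prod, Finset.prod_ne_zero_iff, Nat.factorial_ne_zero]
  unfold TaylorP
  rw [pdList_sum_on isOpen_univ _ _ (fun j _ => (contDiff_const.mul
      (contDiff_monoC c j)).contDiffOn) c trivial, Finset.sum_congr rfl hterm,
    Finset.sum_ite_eq, if_pos (mem_MIlt.2 (MI.deg_ofList L ▸ hL))]
  field_simp

structure FlatAt (U : Set (Pt d)) (n : ℕ) (f : Pt d → ℂ) (c : Pt d) : Prop where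
  contDiffOn : ContDiffOn ℝ n f U
  pdList_eq_zero : ∀ L : List (Option (Fin d)), L.length ≤ n → pdList (L.map dirv) f c = 0

namespace FlatAt

variable {U : Set (Pt d)} {n : ℕ} {f g : Pt d → ℂ} {c : Pt d}

lemma mono {m : ℕ} (h : FlatAt U n f c) (hmn : m ≤ n) : FlatAt U m f c :=
  ⟨h.contDiffOn.of_le (by exact_mod_cast hmn), fun L hL => h.pdList_eq_zero L (hL.trans hmn)⟩

lemma pd_dirv (h : FlatAt U (n + 1) f c) (hU : IsOpen U) (o : Option (Fin d)) :
    FlatAt U n (pd (dirv o) f) c :=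
  ⟨h.contDiffOn.pd hU _, fun L hL => h.pdList_eq_zero (o :: L) (by simpa using hL)⟩

lemma add (hf : FlatAt U n f c) (hg : FlatAt U n g c) (hU : IsOpen U) (hc : c ∈ U) :
    FlatAt U n (fun z => f z + g z) c :=
  ⟨hf.contDiffOn.add hg.contDiffOn, fun L hL => by
    rw [pdList_add_on hU _ (hf.contDiffOn.of_le (by simpa using hL))
      (hg.contDiffOn.of_le (by simpa using hL)) c hc, hf.pdList_eq_zero L hL,
      hg.pdList_eq_zero L hL, add_zero]⟩

lemma sub (hf : FlatAt U n f c) (hg : FlatAt U n g c) (hU : IsOpen U) (hc : c ∈ U) :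
    FlatAt U n (fun z => f z - g z) c :=
  ⟨hf.contDiffOn.sub hg.contDiffOn, fun L hL => by
    rw [pdList_sub_on hU _ (hf.contDiffOn.of_le (by simpa using hL))
      (hg.contDiffOn.of_le (by simpa using hL)) c hc, hf.pdList_eq_zero L hL,
      hg.pdList_eq_zero L hL, sub_zero]⟩

lemma const_mul (hf : FlatAt U n f c) (hU : IsOpen U) (hc : c ∈ U) (a : ℂ) :
    FlatAt U n (fun z => a * f z) c :=
  ⟨contDiffOn_const.mul hf.contDiffOn, fun L hL => by
    rw [pdList_const_mul_on hU _ a (hf.contDiffOn.of_le (by simpa using hL)) c hc,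
      hf.pdList_eq_zero L hL, mul_zero]⟩

lemma sum {ι : Type*} {s : Finset ι} {F : ι → Pt d → ℂ}
    (hF : ∀ i ∈ s, FlatAt U n (F i) c) (hU : IsOpen U) (hc : c ∈ U) :
    FlatAt U n (fun z => ∑ i ∈ s, F i z) c :=
  ⟨ContDiffOn.sum fun i hi => (hF i hi).contDiffOn, fun L hL => by
    rw [pdList_sum_on hU _ s (fun i hi => (hF i hi).contDiffOn.of_le (by simpa using hL)) c hc]
    exact Finset.sum_eq_zero fun i hi => (hF i hi).pdList_eq_zero L hL⟩

lemma mul_left (hf : FlatAt U n f c) (hg : ContDiffOn ℝ n g U) (hU : IsOpen U) (hc : c ∈ U) :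
    FlatAt U n (fun z => g z * f z) c := by
  refine ⟨hg.mul hf.contDiffOn, fun L hL => ?_⟩
  induction L generalizing n f g with
  | nil => exact mul_eq_zero_of_right (g c) (hf.pdList_eq_zero [] hL)
  | cons o L ih =>
    obtain ⟨m, rfl⟩ : ∃ m, n = m + 1 := ⟨n - 1, by simp at hL; omega⟩
    have hL' : L.length ≤ m := by simpa using hL
    have hpg : ContDiffOn ℝ m (pd (dirv o) g) U := hg.pd hU _
    have hg' : ContDiffOn ℝ m g U := hg.of_le (by exact_mod_cast m.le_succ)
    have hprod : ∀ w ∈ U, pd (dirv o) (fun z => g z * f z) w =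
        pd (dirv o) g w * f w + g w * pd (dirv o) f w := fun w hw =>
      pd_mul _ (hf.contDiffOn.differentiableAt_of_isOpen hU hw)
        (hg.differentiableAt_of_isOpen hU hw)
    rw [List.map_cons, pdList_cons, pdList_congr_on hU hprod _ c hc,
      pdList_add_on hU _ ((hpg.mul (hf.mono m.le_succ).contDiffOn).of_le (by simpa using hL'))
        ((hg'.mul (hf.pd_dirv hU o).contDiffOn).of_le (by simpa using hL')) c hc,
      ih (hf.mono m.le_succ) hpg hL', ih (hf.pd_dirv hU o) hg' hL', add_zero]

lemma sop (hf : FlatAt U (n + 2) f c) {V : Pt d → ℝ} (hV : ContDiffOn ℝ n V U) (hU : IsOpen U)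
    (hc : c ∈ U) : FlatAt U n (Sop V f) c := by
  have ht : FlatAt U n (pd (tDir d) f) c := (hf.pd_dirv hU none).mono n.le_succ
  have hx : ∀ ℓ, FlatAt U n (pd (eDir d ℓ) (pd (eDir d ℓ) f)) c :=
    fun ℓ => (hf.pd_dirv hU (some ℓ)).pd_dirv hU (some ℓ)
  have hVf : FlatAt U n (fun z => (V z : ℂ) * f z) c :=
    (hf.mono (by omega)).mul_left (Complex.ofRealCLM.contDiff.comp_contDiffOn hV) hU hc
  exact ((ht.const_mul hU hc _).add ((sum (fun ℓ _ => hx ℓ) hU hc).const_mul hU hc _) hU hc).sub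
    hVf hU hc

lemma Dmi_eq_zero (h : FlatAt U n f c) {j : MI d} (hj : MI.deg j ≤ n) : Dmi j f c = 0 := by
  rw [Dmi_eq_pdList]
  exact h.pdList_eq_zero _ (by simpa [MI.length_toList] using hj)

end FlatAt

lemma flatAt_taylorP_sub {U : Set (Pt d)} (hU : IsOpen U) {c : Pt d} (hc : c ∈ U) {p : ℕ}
    {φ : Pt d → ℂ} (hφ : ContDiffOn ℝ p φ U) :
    FlatAt U p (fun z => TaylorP (p + 1) c φ z - φ z) c := by
  refine ⟨(contDiff_taylorP _ c φ).contDiffOn.sub hφ, fun L hL => ?_⟩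
  have hφL : ContDiffOn ℝ L.length φ U := hφ.of_le (by exact_mod_cast hL)
  rw [pdList_sub_on hU _ (contDiff_taylorP _ c φ).contDiffOn (by simpa using hφL) c hc,
    pdList_taylorP_self c φ (Nat.lt_succ_of_le hL), pdList_eq_Dmi_ofList hU L hφL hc, sub_self]

lemma Sop_sub_on {U : Set (Pt d)} (hU : IsOpen U) {f g : Pt d → ℂ} (hf : ContDiffOn ℝ 2 f U)
    (hg : ContDiffOn ℝ 2 g U) (V : Pt d → ℝ) :
    ∀ z ∈ U, Sop V (fun z => f z - g z) z = Sop V f z - Sop V g z := by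
  intro z hz
  have ht := pdList_sub_on hU [tDir d] (hf.of_le (by simp)) (hg.of_le (by simp)) z hz
  have hx := fun ℓ => pdList_sub_on hU [eDir d ℓ, eDir d ℓ] hf hg z hz
  simp only [pdList_cons, pdList_nil] at ht hx
  simp only [Sop, ht, hx, Finset.sum_sub_distrib]
  ring

open MvPolynomial in
lemma totalDegree_prod_X_sub_C_pow_le {σ R : Type*} [Fintype σ] [CommRing R] [Nontrivial R]
    (a : σ → R) (k : σ →₀ ℕ) :
    (∏ o, (X o - C (a o)) ^ k o : MvPolynomial σ R).totalDegree ≤ ∑ o, k o := by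
  refine (totalDegree_finsetProd _ _).trans (Finset.sum_le_sum fun o _ => ?_)
  refine (totalDegree_pow _ _).trans (mul_le_of_le_one_right (Nat.zero_le _) ?_)
  exact (totalDegree_sub _ _).trans (by simp [totalDegree_X, totalDegree_C])

def evalPt (z : Pt d) (o : Option (Fin d)) : ℂ := (coord o z : ℂ)

lemma mem_polySet_of_totalDegree_le {p : ℕ} {P : MvPolynomial (Option (Fin d)) ℂ}
    (hP : P.totalDegree ≤ p) : (fun z => MvPolynomial.eval (evalPt z) P) ∈ PolySet d p := by
  refine ⟨fun j => P.coeff (MI.toFinsupp j), fun z => ?_⟩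
  have hsupp : P.support ⊆ (MIle d p).map MI.toFinsupp.toEmbedding := fun s hs => by
    refine Finset.mem_map_equiv.2 (mem_MIle.2 ?_)
    rw [MI.deg_eq_sum, Equiv.apply_symm_apply]
    simpa [Finsupp.sum_fintype] using (MvPolynomial.le_totalDegree hs).trans hP
  dsimp only
  rw [MvPolynomial.eval_eq', Finset.sum_subset hsupp fun s _ hs => by
    simp [MvPolynomial.notMem_support_iff.1 hs], Finset.sum_map]
  simp [monoC_one_eq_shiftedMono, shiftedMono, evalPt, Prod.mk_zero_zero]

lemma taylorP_mem_polySet (p : ℕ) (c : Pt d) (φ : Pt d → ℂ) :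
    TaylorP (p + 1) c φ ∈ PolySet d p := by
  open MvPolynomial in
  let P : MvPolynomial (Option (Fin d)) ℂ := ∑ j ∈ MIlt d (p + 1),
    C ((MI.fact j : ℂ)⁻¹ * Dmi j φ c) * ∏ o, (X o - C (evalPt c o)) ^ MI.toFinsupp j o
  have hP : P.totalDegree ≤ p := by
    refine (MvPolynomial.totalDegree_finsetSum _ _).trans (Finset.sup_le fun j hj => ?_)
    refine (MvPolynomial.totalDegree_mul _ _).trans ?_
    rw [MvPolynomial.totalDegree_C, zero_add, ← Nat.lt_succ_iff]
    exact (totalDegree_prod_X_sub_C_pow_le _ _).trans_lt (MI.deg_eq_sum j ▸ mem_MIlt.1 hj)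
  convert mem_polySet_of_totalDegree_le hP using 1
  funext z
  simp [P, TaylorP, monoC_one_eq_shiftedMono, shiftedMono, evalPt]

end

theorem taylorP_mem_quasiTrefftz_general
    (d p : ℕ)
    (K : Set (Pt d)) (hK : IsOpen K) (cK : Pt d) (hcK : cK ∈ K)
    (V : Pt d → ℝ) (hV : ContDiffOn ℝ (max (p - 2) 0 : ℕ) V K)
    (ψ : Pt d → ℂ) (hψ : ContDiffOn ℝ (p : ℕ) ψ K)
    (hsol : ∀ z ∈ K, Sop V ψ z = 0) :
    TaylorP (p + 1) cK ψ ∈ QTset d p V cK := by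
  refine ⟨taylorP_mem_polySet p cK ψ, fun j hj => ?_⟩
  obtain ⟨n, rfl⟩ : ∃ n, p = n + 2 := ⟨p - 2, by omega⟩
  have hSq : ∀ z ∈ K, Sop V (TaylorP (n + 2 + 1) cK ψ) z =
      Sop V (fun z => TaylorP (n + 2 + 1) cK ψ z - ψ z) z := fun z hz => by
    rw [Sop_sub_on hK (contDiff_taylorP _ cK ψ).contDiffOn (hψ.of_le (by simp)) V z hz,
      hsol z hz, sub_zero]
  rw [Dmi_congr_on hK hSq j cK hcK]
  exact ((flatAt_taylorP_sub hK hcK hψ).sop (by simpa using hV) hK hcK).Dmi_eq_zero (by omega)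

/-- If `ψ ∈ C^p(K)` solves `Sψ = 0` on the open set `K ∋ (x_K,t_K)` and
`V ∈ C^{max(p−2,0)}(K;ℝ)`, then the Taylor polynomial of order `p+1` of `ψ` centered at
`(x_K,t_K)` belongs to the quasi-Trefftz space `QT^p(K)`. -/
theorem taylorP_mem_quasiTrefftz
    (d p : ℕ) (hd : 1 ≤ d) (hp : 1 ≤ p)
    (K : Set (Pt d)) (hK : IsOpen K) (cK : Pt d) (hcK : cK ∈ K)
    (V : Pt d → ℝ) (hV : ContDiffOn ℝ (max (p - 2) 0 : ℕ) V K)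
    (ψ : Pt d → ℂ) (hψ : ContDiffOn ℝ (p : ℕ) ψ K)
    (hsol : ∀ z ∈ K, Sop V ψ z = 0) :
    TaylorP (p + 1) cK ψ ∈ QTset d p V cK :=
  taylorP_mem_quasiTrefftz_general d p K hK cK hcK V hV ψ hψ hsol

end
end

section
/- Let d ∈ ℕ, d ≥ 1, let p ∈ ℕ, p ≥ 1, let K ⊆ ℝ^{d+1} be open with (x_K,t_K) ∈ K, let x_K^{(1)} denote the first coordinate of x_K, and let V ∈ C^{max(p−2,0)}(K;ℝ). If q ∈ QT^p(K) satisfies q(x,t) = 0 and (∂_{x_1}q)(x,t) = 0 for every point (x,t) ∈ ℝ^{d+1} whose first spatial coordinate equals x_K^{(1)}, then q is the zero polynomial. In other words, an element of QT^p(K) is uniquely determined by its restriction and the restriction of its ∂_{x_1}-derivative to the hyperplane {x_1 = x_K^{(1)}}. -/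
open scoped BigOperators
open MeasureTheory

noncomputable section

/-!
Write `H = {x₁ = c₁}` for the hyperplane through the centre `c`. A derivative `D^j q (c)` with
`j_{x₁} = 0` is a tangential derivative of `q`, and one with `j_{x₁} = 1` a tangential derivative
of `∂_{x₁} q`; both vanish because `q` and `∂_{x₁} q` vanish on `H`. If `j = j' + 2e₁` with
`|j| ≤ p`, the quasi-Trefftz condition `D^{j'}(Sq)(c) = 0` expresses `½ D^j q (c)` through
`D^{j'} ∂_t q`, `D^{j'} ∂²_{x_ℓ} q` (`ℓ ≠ 1`) and, by the Leibniz rule, derivatives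
`D^{j''} q` with `j'' ≤ j'`; all of these have fewer `∂_{x₁}`'s. Induction on `j_{x₁}` therefore
kills every derivative of order `≤ p` at `c`, and these determine a polynomial of degree `≤ p`.
-/

namespace QuasiTrefftz

/-! ### Iterated directional derivatives -/

open Set
open scoped ContDiff

variable {d : ℕ}

def pdList (L : List (Pt d)) (f : Pt d → ℂ) : Pt d → ℂ := L.foldr pd f

@[simp] lemma pdList_nil (f : Pt d → ℂ) : pdList [] f = f := rfl

@[simp] lemma pdList_cons (v : Pt d) (L : List (Pt d)) (f : Pt d → ℂ) :
    pdList (v :: L) f = pd v (pdList L f) := rfl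

lemma pdList_append (L₁ L₂ : List (Pt d)) (f : Pt d → ℂ) :
    pdList (L₁ ++ L₂) f = pdList L₁ (pdList L₂ f) :=
  List.foldr_append

lemma iterate_pd (v : Pt d) (n : ℕ) (f : Pt d → ℂ) :
    (pd v)^[n] f = pdList (List.replicate n v) f := by
  induction n with
  | zero => rfl
  | succ n ih => rw [Function.iterate_succ_apply', ih]; rfl

lemma pd_congr_on {K : Set (Pt d)} (hK : IsOpen K) {f g : Pt d → ℂ} (h : EqOn f g K)
    (v : Pt d) : EqOn (pd v f) (pd v g) K := fun z hz => by
  simp only [pd, (h.eventuallyEq_of_mem (hK.mem_nhds hz)).fderiv_eq]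

lemma pd_add_apply {f g : Pt d → ℂ} {z : Pt d} (hf : DifferentiableAt ℝ f z)
    (hg : DifferentiableAt ℝ g z) (v : Pt d) : pd v (f + g) z = pd v f z + pd v g z := by
  simp [pd, fderiv_add hf hg]

lemma pd_sub_apply {f g : Pt d → ℂ} {z : Pt d} (hf : DifferentiableAt ℝ f z)
    (hg : DifferentiableAt ℝ g z) (v : Pt d) : pd v (f - g) z = pd v f z - pd v g z := by
  simp [pd, fderiv_sub hf hg]

lemma pd_mul_apply {f g : Pt d → ℂ} {z : Pt d} (hf : DifferentiableAt ℝ f z)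
    (hg : DifferentiableAt ℝ g z) (v : Pt d) :
    pd v (fun y => f y * g y) z = pd v f z * g z + f z * pd v g z := by
  simp [pd, fderiv_fun_mul hf hg, mul_comm, add_comm]

lemma pd_sum_apply {ι : Type*} (s : Finset ι) {f : ι → Pt d → ℂ} {z : Pt d}
    (hf : ∀ i ∈ s, DifferentiableAt ℝ (f i) z) (v : Pt d) :
    pd v (fun z => ∑ i ∈ s, f i z) z = ∑ i ∈ s, pd v (f i) z := by
  simp [pd, fderiv_fun_sum hf]

lemma pd_const_mul (a : ℂ) (f : Pt d → ℂ) (v : Pt d) :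
    pd v (fun z => a * f z) = fun z => a * pd v f z := by
  have : (fun z => a * f z) = a • f := rfl
  funext z
  simp only [pd, this, fderiv_const_smul_field]
  rfl

lemma contDiffOn_pd {K : Set (Pt d)} (hK : IsOpen K) {f : Pt d → ℂ} {n : ℕ}
    (hf : ContDiffOn ℝ (n + 1) f K) (v : Pt d) : ContDiffOn ℝ n (pd v f) K :=
  (ContinuousLinearMap.apply ℝ ℂ v).contDiff.comp_contDiffOn (hf.fderiv_of_isOpen hK le_rfl)

lemma contDiffOn_pdList {K : Set (Pt d)} (hK : IsOpen K) {f : Pt d → ℂ} {n : ℕ} (L : List (Pt d))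
    (hf : ContDiffOn ℝ (n + L.length) f K) : ContDiffOn ℝ n (pdList L f) K := by
  induction L generalizing n with
  | nil => simpa using hf
  | cons v L ih =>
    refine contDiffOn_pd hK (ih (n := n + 1) ?_) v
    convert hf using 1
    simp only [List.length_cons, Nat.cast_add, Nat.cast_one]
    ring

lemma differentiableAt_pdList {K : Set (Pt d)} (hK : IsOpen K) {f : Pt d → ℂ} {L : List (Pt d)}
    {z : Pt d} (hf : ContDiffOn ℝ (L.length + 1) f K) (hz : z ∈ K) :
    DifferentiableAt ℝ (pdList L f) z :=
  ((contDiffOn_pdList hK (n := 1) L (by simpa [add_comm] using hf)).differentiableOn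
    one_ne_zero).differentiableAt (hK.mem_nhds hz)

lemma contDiff_pd {f : Pt d → ℂ} (hf : ContDiff ℝ ∞ f) (v : Pt d) : ContDiff ℝ ∞ (pd v f) :=
  (ContinuousLinearMap.apply ℝ ℂ v).contDiff.comp (hf.fderiv_right le_rfl)

lemma contDiff_pdList {f : Pt d → ℂ} (hf : ContDiff ℝ ∞ f) (L : List (Pt d)) :
    ContDiff ℝ ∞ (pdList L f) := by
  induction L with
  | nil => exact hf
  | cons v L ih => exact contDiff_pd ih v

lemma pdList_add_on {K : Set (Pt d)} (hK : IsOpen K) {f g : Pt d → ℂ} (L : List (Pt d))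
    (hf : ContDiffOn ℝ L.length f K) (hg : ContDiffOn ℝ L.length g K) :
    EqOn (pdList L (f + g)) (pdList L f + pdList L g) K := by
  induction L with
  | nil => exact fun _ _ => rfl
  | cons v L ih =>
    intro z hz
    simp only [List.length_cons, Nat.cast_add, Nat.cast_one] at hf hg
    rw [pdList_cons, pd_congr_on hK (ih (hf.of_le le_self_add) (hg.of_le le_self_add)) v hz]
    exact pd_add_apply (differentiableAt_pdList hK hf hz) (differentiableAt_pdList hK hg hz) v

lemma pdList_sub_on {K : Set (Pt d)} (hK : IsOpen K) {f g : Pt d → ℂ} (L : List (Pt d))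
    (hf : ContDiffOn ℝ L.length f K) (hg : ContDiffOn ℝ L.length g K) :
    EqOn (pdList L (f - g)) (pdList L f - pdList L g) K := by
  induction L with
  | nil => exact fun _ _ => rfl
  | cons v L ih =>
    intro z hz
    simp only [List.length_cons, Nat.cast_add, Nat.cast_one] at hf hg
    rw [pdList_cons, pd_congr_on hK (ih (hf.of_le le_self_add) (hg.of_le le_self_add)) v hz]
    exact pd_sub_apply (differentiableAt_pdList hK hf hz) (differentiableAt_pdList hK hg hz) v

lemma pdList_sum_on {K : Set (Pt d)} (hK : IsOpen K) {ι : Type*} (s : Finset ι)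
    {f : ι → Pt d → ℂ} (L : List (Pt d)) (hf : ∀ i ∈ s, ContDiffOn ℝ L.length (f i) K) :
    EqOn (pdList L fun z => ∑ i ∈ s, f i z) (fun z => ∑ i ∈ s, pdList L (f i) z) K := by
  induction L with
  | nil => exact fun _ _ => rfl
  | cons v L ih =>
    intro z hz
    simp only [List.length_cons, Nat.cast_add, Nat.cast_one] at hf
    rw [pdList_cons, pd_congr_on hK (ih fun i hi => (hf i hi).of_le le_self_add) v hz]
    exact pd_sum_apply s (fun i hi => differentiableAt_pdList hK (hf i hi) hz) v

lemma pdList_const_mul (a : ℂ) (f : Pt d → ℂ) (L : List (Pt d)) :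
    pdList L (fun z => a * f z) = fun z => a * pdList L f z := by
  induction L with
  | nil => rfl
  | cons v L ih => rw [pdList_cons, ih, pd_const_mul]; rfl

/-- The Leibniz rule, keeping track only of which derivatives of `g` occur. -/
lemma exists_pdList_mul_eq_sum {K : Set (Pt d)} (hK : IsOpen K) (L : List (Pt d)) {n : ℕ}
    {W g : Pt d → ℂ} (hW : ContDiffOn ℝ (n + L.length) W K)
    (hg : ContDiffOn ℝ (n + L.length) g K) :
    ∃ (ι : Type) (s : Finset ι) (c : ι → Pt d → ℂ) (S : ι → List (Pt d)),
      (∀ i ∈ s, ContDiffOn ℝ n (c i) K ∧ (S i).Sublist L) ∧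
      EqOn (pdList L (W * g)) (fun z => ∑ i ∈ s, c i z * pdList (S i) g z) K := by
  induction L generalizing n with
  | nil => exact ⟨Unit, {()}, fun _ => W, fun _ => [], by simpa using hW, fun z _ => by simp⟩
  | cons v L ih =>
    have hlen : (n : WithTop ℕ∞) + (v :: L).length = ↑(n + 1) + L.length := by
      simp only [List.length_cons]; push_cast; ring
    rw [hlen] at hW hg
    obtain ⟨ι, s, c, S, hcS, heq⟩ := ih hW hg
    refine ⟨ι × Bool, s ×ˢ Finset.univ, fun x => bif x.2 then c x.1 else pd v (c x.1),
      fun x => bif x.2 then v :: S x.1 else S x.1, ?_, ?_⟩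
    · rintro ⟨i, b⟩ hi
      obtain ⟨hc, hS⟩ := hcS i (Finset.mem_product.mp hi).1
      cases b
      · exact ⟨contDiffOn_pd hK (by exact_mod_cast hc) v, hS.cons v⟩
      · exact ⟨hc.of_le (by exact_mod_cast Nat.le_succ n), hS.cons_cons v⟩
    · intro z hz
      have hdiff : ∀ i ∈ s, DifferentiableAt ℝ (pdList (S i) g) z := fun i hi =>
        differentiableAt_pdList hK (hg.of_le (by
          have := (hcS i hi).2.length_le
          exact_mod_cast (by omega : (S i).length + 1 ≤ n + 1 + L.length))) hz
      have hc : ∀ i ∈ s, DifferentiableAt ℝ (c i) z := fun i hi =>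
        ((hcS i hi).1.differentiableOn (by simp)).differentiableAt (hK.mem_nhds hz)
      rw [pdList_cons, pd_congr_on hK heq v hz,
        pd_sum_apply s (f := fun i y => c i y * pdList (S i) g y)
          (fun i hi => (hc i hi).mul (hdiff i hi)) v]
      simp only [Finset.sum_product]
      refine Finset.sum_congr rfl fun i hi => ?_
      rw [Fintype.sum_bool, pd_mul_apply (hc i hi) (hdiff i hi)]
      simp only [cond_true, cond_false, pdList_cons]
      ring

lemma pd_comm {f : Pt d → ℂ} (hf : ContDiff ℝ 2 f) (v w : Pt d) :
    pd v (pd w f) = pd w (pd v f) := by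
  funext z
  have hsnd : ∀ a b : Pt d, pd a (pd b f) z = fderiv ℝ (fderiv ℝ f) z a b := fun a b => by
    have h1 : DifferentiableAt ℝ (fderiv ℝ f) z :=
      (hf.fderiv_right (m := 1) le_rfl).differentiable one_ne_zero z
    change fderiv ℝ (fun y => fderiv ℝ f y b) z a = _
    simp [fderiv_clm_apply h1 (differentiableAt_const b)]
  rw [hsnd, hsnd, (hf.contDiffAt.isSymmSndFDerivAt (by simp)).eq]

lemma pdList_perm {f : Pt d → ℂ} (hf : ContDiff ℝ ∞ f) {L L' : List (Pt d)} (h : L.Perm L') :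
    pdList L f = pdList L' f := by
  induction h with
  | nil => rfl
  | cons v _ ih => rw [pdList_cons, ih, pdList_cons]
  | swap v w L => exact pd_comm ((contDiff_pdList hf L).of_le ENat.LEInfty.out) w v
  | trans _ _ ih₁ ih₂ => exact ih₁.trans ih₂

lemma pd_eq_zero_of_tangent {i₀ : Fin d} {a : ℝ} {f : Pt d → ℂ} (hf : Differentiable ℝ f)
    {v : Pt d} (hv : v.1 i₀ = 0) (h : ∀ z : Pt d, z.1 i₀ = a → f z = 0) :
    ∀ z : Pt d, z.1 i₀ = a → pd v f z = 0 := fun z hz => by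
  have hline : (fun t : ℝ => f (z + t • v)) = fun _ => 0 :=
    funext fun t => h _ (by simp [hz, hv])
  rw [pd, ← (hf z).lineDeriv_eq_fderiv, lineDeriv, hline, deriv_const]

lemma pdList_eq_zero_of_tangent {i₀ : Fin d} {a : ℝ} {f : Pt d → ℂ} (hf : ContDiff ℝ ∞ f)
    {L : List (Pt d)} (hL : ∀ v ∈ L, v.1 i₀ = 0) (h : ∀ z : Pt d, z.1 i₀ = a → f z = 0) :
    ∀ z : Pt d, z.1 i₀ = a → pdList L f z = 0 := by
  induction L with
  | nil => exact h
  | cons v L ih =>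
    exact pd_eq_zero_of_tangent ((contDiff_pdList hf L).differentiable (by simp))
      (hL v List.mem_cons_self) (ih fun w hw => hL w (List.mem_cons_of_mem v hw))

/-! ### Multi-indices and monomials -/

abbrev Coord (d : ℕ) : Type := Option (Fin d)

namespace Coord

def vec : Coord d → Pt d
  | none => tDir d
  | some ℓ => eDir d ℓ

def proj : Coord d → Pt d → ℝ
  | none, z => z.2
  | some ℓ, z => z.1 ℓ

lemma proj_add_smul_vec (i i' : Coord d) (z : Pt d) (s : ℝ) :
    proj i' (z + s • vec i) = proj i' z + if i' = i then s else 0 := by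
  cases i <;> cases i' <;> simp [proj, vec, eDir, eVecd, tDir, eq_comm]

lemma vec_fst_eq_zero {i : Coord d} {ℓ : Fin d} (h : i ≠ some ℓ) : (vec i).1 ℓ = 0 := by
  cases i with
  | none => rfl
  | some m => simpa [vec, eDir, eVecd, eq_comm] using h

end Coord

def MI.exps (j : MI d) : Coord d → ℕ
  | none => j.2
  | some ℓ => j.1 ℓ

def MI.ofList (L : List (Coord d)) : MI d := (fun ℓ => L.count (some ℓ), L.count none)

def MI.toList (j : MI d) : List (Coord d) :=
  ((List.finRange d).flatMap fun ℓ => List.replicate (j.1 ℓ) (some ℓ)) ++ List.replicate j.2 none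

lemma MI.exps_injective : Function.Injective (MI.exps (d := d)) := fun _ _ h =>
  Prod.ext (funext fun ℓ => congrFun h (some ℓ)) (congrFun h none)

lemma MI.deg_eq_sum_exps (j : MI d) : MI.deg j = ∑ i, MI.exps j i := by
  rw [Fintype.sum_option, MI.deg, add_comm]; rfl

lemma MI.fact_eq_prod_exps (j : MI d) : MI.fact j = ∏ i, (MI.exps j i).factorial := by
  rw [Fintype.prod_option, MI.fact, mul_comm]; rfl

lemma MI.exps_ofList (L : List (Coord d)) (i : Coord d) : MI.exps (MI.ofList L) i = L.count i := by
  cases i <;> rfl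

lemma MI.count_toList (j : MI d) (i : Coord d) : (MI.toList j).count i = MI.exps j i := by
  cases i <;>
    simp [MI.toList, MI.exps, List.count_flatMap, List.count_replicate, ← Fin.sum_univ_def]

lemma MI.length_toList (j : MI d) : (MI.toList j).length = MI.deg j := by
  simp [MI.toList, MI.deg, List.length_flatMap, ← Fin.sum_univ_def]

lemma MI.toList_ofList_perm (L : List (Coord d)) : (MI.toList (MI.ofList L)).Perm L :=
  List.perm_iff_count.mpr fun i => by rw [MI.count_toList, MI.exps_ofList]

lemma MI.deg_ofList (L : List (Coord d)) : MI.deg (MI.ofList L) = L.length := by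
  rw [← MI.length_toList, (MI.toList_ofList_perm L).length_eq]

lemma Dmi_eq_pdList (j : MI d) (f : Pt d → ℂ) :
    Dmi j f = pdList ((MI.toList j).map Coord.vec) f := by
  suffices ∀ Lf : List (Fin d),
      Lf.foldr (fun ℓ g => (pd (eDir d ℓ))^[j.1 ℓ] g) ((pd (tDir d))^[j.2] f) =
        pdList (((Lf.flatMap fun ℓ => List.replicate (j.1 ℓ) (some ℓ)) ++
          List.replicate j.2 none).map Coord.vec) f from this _
  intro Lf
  induction Lf with
  | nil => simp [iterate_pd, Coord.vec]
  | cons ℓ Lf ih =>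
    rw [List.foldr_cons, ih, iterate_pd]
    simp [Coord.vec, pdList_append]

def mono (g : Coord d → ℕ) (z : Pt d) : ℂ := ∏ i, (Coord.proj i z : ℂ) ^ g i

lemma monoC_eq_mono (j : MI d) : monoC ((0 : Fin d → ℝ), (0 : ℝ)) 1 j = mono (MI.exps j) := by
  funext z
  simp [monoC, mono, Fintype.prod_option, Coord.proj, MI.exps, mul_comm]

lemma contDiff_mono (g : Coord d → ℕ) {n : WithTop ℕ∞} : ContDiff ℝ n (mono g) := by
  refine contDiff_prod fun i _ => (Complex.ofRealCLM.contDiff.comp ?_).pow _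
  cases i with
  | none => exact contDiff_snd
  | some ℓ => exact (contDiff_apply ℝ ℝ ℓ).comp contDiff_fst

lemma pd_vec_mono (g : Coord d → ℕ) (i : Coord d) :
    pd (Coord.vec i) (mono g) = fun z => g i * mono (g - Pi.single i 1) z := by
  funext z
  set rest := ∏ i' ∈ Finset.univ.erase i, (Coord.proj i' z : ℂ) ^ g i'
  have hsplit : ∀ (h : Coord d → ℕ) (t : ℝ), (∀ i' ≠ i, h i' = g i') →
      mono h (z + t • Coord.vec i) = ((Coord.proj i z + t : ℝ) : ℂ) ^ h i * rest := by
    intro h t hh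
    rw [mono, ← Finset.mul_prod_erase _ _ (Finset.mem_univ i)]
    refine congrArg₂ _ (by simp [Coord.proj_add_smul_vec]) (Finset.prod_congr rfl fun i' hi' => ?_)
    have hne := Finset.ne_of_mem_erase hi'
    simp [Coord.proj_add_smul_vec, hne, hh i' hne]
  have hderiv : HasDerivAt (fun t : ℝ => mono g (z + t • Coord.vec i))
      (g i * ((Coord.proj i z : ℝ) : ℂ) ^ (g i - 1) * rest) 0 := by
    simp_rw [hsplit g _ fun _ _ => rfl]
    simpa using ((((hasDerivAt_id (0 : ℝ)).const_add (Coord.proj i z)).ofReal_comp).fun_pow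
      (g i)).mul_const rest
  have hlower := hsplit (g - Pi.single i 1) 0 fun i' hi' => by simp [hi']
  rw [zero_smul, add_zero, add_zero] at hlower
  rw [pd, ← ((contDiff_mono g (n := 1)).differentiable one_ne_zero z).lineDeriv_eq_fderiv,
    lineDeriv, hderiv.deriv, hlower]
  simp [mul_assoc]

lemma pdList_mono (g : Coord d → ℕ) (L : List (Coord d)) :
    pdList (L.map Coord.vec) (mono g) = fun z =>
      ((∏ i, (g i).descFactorial (L.count i) : ℕ) : ℂ) * mono (fun i => g i - L.count i) z := by
  induction L with
  | nil => simp
  | cons a L ih =>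
    have hexps : (fun i => g i - L.count i) - Pi.single a 1 = fun i => g i - (a :: L).count i := by
      funext i
      by_cases h : i = a
      · simp [h, Nat.sub_sub]
      · simp [h, Ne.symm h]
    have hcoef : ∏ i, (g i).descFactorial ((a :: L).count i) =
        (g a - L.count a) * ∏ i, (g i).descFactorial (L.count i) := by
      have hrest : ∏ i ∈ Finset.univ.erase a, (g i).descFactorial ((a :: L).count i) =
          ∏ i ∈ Finset.univ.erase a, (g i).descFactorial (L.count i) :=
        Finset.prod_congr rfl fun i hi => by
          simp [Ne.symm (Finset.ne_of_mem_erase hi)]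
      rw [← Finset.mul_prod_erase _ _ (Finset.mem_univ a), hrest,
        ← Finset.mul_prod_erase _ (fun i => (g i).descFactorial (L.count i)) (Finset.mem_univ a)]
      simp [Nat.descFactorial_succ, mul_assoc]
    rw [List.map_cons, pdList_cons, ih, pd_const_mul, pd_vec_mono, hexps, hcoef]
    funext z
    push_cast
    ring

lemma pdList_sum_mono (s : Finset (MI d)) (C : MI d → ℂ) (L : List (Coord d)) :
    pdList (L.map Coord.vec) (fun z => ∑ j ∈ s, C j * mono (MI.exps j) z) = fun z =>
      ∑ j ∈ s, C j * ((∏ i, (MI.exps j i).descFactorial (L.count i) : ℕ) : ℂ) *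
        mono (fun i => MI.exps j i - L.count i) z := by
  funext z
  rw [pdList_sum_on isOpen_univ s _ (fun j _ => (contDiff_const.mul (contDiff_mono _)).contDiffOn)
    (mem_univ z)]
  simp [pdList_const_mul, pdList_mono, mul_assoc]

lemma prod_descFactorial_exps_eq_zero {w w' : MI d} (hdeg : MI.deg w' ≤ MI.deg w) (hne : w' ≠ w) :
    ∏ i, (MI.exps w' i).descFactorial (MI.exps w i) = 0 := by
  simp only [Finset.prod_eq_zero_iff, Finset.mem_univ, true_and, Nat.descFactorial_eq_zero_iff_lt]
  by_contra! hle
  have hsum : ∑ i, MI.exps w i = ∑ i, MI.exps w' i := by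
    rw [MI.deg_eq_sum_exps, MI.deg_eq_sum_exps] at hdeg
    exact le_antisymm (Finset.sum_le_sum fun i _ => hle i) hdeg
  exact hne (MI.exps_injective (funext fun i =>
    ((Finset.sum_eq_sum_iff_of_le fun i _ => hle i).mp hsum i (Finset.mem_univ i)).symm))

lemma Dmi_sum_mono_of_max {s : Finset (MI d)} {C : MI d → ℂ} {w : MI d} (hw : w ∈ s)
    (hmax : ∀ w' ∈ s, C w' ≠ 0 → MI.deg w' ≤ MI.deg w) (c : Pt d) :
    Dmi w (fun z => ∑ j ∈ s, C j * mono (MI.exps j) z) c = C w * MI.fact w := by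
  rw [Dmi_eq_pdList, pdList_sum_mono]
  dsimp only
  rw [Finset.sum_eq_single_of_mem w hw fun w' hw' hne => ?_]
  · simp [MI.count_toList, MI.fact_eq_prod_exps, Nat.descFactorial_self, mono]
  · by_cases hC : C w' = 0
    · simp [hC]
    · simp [MI.count_toList, prod_descFactorial_exps_eq_zero (hmax w' hw' hC) hne]

lemma contDiff_of_mem_polySet {p : ℕ} {q : Pt d → ℂ} (hq : q ∈ PolySet d p) :
    ContDiff ℝ ∞ q := by
  obtain ⟨C, hC⟩ := hq
  rw [funext hC]
  exact ContDiff.sum fun j _ => contDiff_const.mul ((monoC_eq_mono j) ▸ contDiff_mono _)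

lemma eq_zero_of_Dmi_eq_zero {p : ℕ} {q : Pt d → ℂ} (hq : q ∈ PolySet d p) (c : Pt d)
    (h : ∀ j : MI d, MI.deg j ≤ p → Dmi j q c = 0) : q = 0 := by
  obtain ⟨C, hC⟩ := hq
  simp only [monoC_eq_mono] at hC
  suffices hzero : ∀ w ∈ MIle d p, C w = 0 by
    funext z
    rw [hC, Pi.zero_apply]
    exact Finset.sum_eq_zero fun w hw => by rw [hzero w hw, zero_mul]
  -- a nonzero coefficient of maximal degree would be read off from `D^w q (c) = w! C_w`
  by_contra! hne
  obtain ⟨w, hw, hmax⟩ := ((MIle d p).filter (C · ≠ 0)).exists_max_image MI.deg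
    (by simpa [Finset.filter_nonempty_iff] using hne)
  rw [Finset.mem_filter] at hw
  have hDw := h w (Finset.mem_filter.mp hw.1).2
  rw [funext hC, Dmi_sum_mono_of_max hw.1 (fun w' hw' hC' => hmax w' (by simp [hw', hC'])) c]
    at hDw
  have hfact : (MI.fact w : ℂ) ≠ 0 := Nat.cast_ne_zero.mpr (by unfold MI.fact; positivity)
  exact hw.2 ((mul_eq_zero.mp hDw).resolve_right hfact)

/-! ### Derivatives of a quasi-Trefftz function with vanishing trace -/

lemma pdList_eq_zero_of_count_eq_zero {f : Pt d → ℂ} (hf : ContDiff ℝ ∞ f) {i₀ : Fin d} {a : ℝ}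
    (h : ∀ z : Pt d, z.1 i₀ = a → f z = 0) {L : List (Coord d)} (hL : L.count (some i₀) = 0) :
    ∀ z : Pt d, z.1 i₀ = a → pdList (L.map Coord.vec) f z = 0 := by
  refine pdList_eq_zero_of_tangent hf (fun v hv => ?_) h
  obtain ⟨i, hi, rfl⟩ := List.mem_map.mp hv
  exact Coord.vec_fst_eq_zero fun he => List.count_eq_zero.mp hL (he ▸ hi)

lemma pdList_eq_zero_of_count_eq_one {q : Pt d → ℂ} (hq : ContDiff ℝ ∞ q) {i₀ : Fin d} {a : ℝ}
    (h : ∀ z : Pt d, z.1 i₀ = a → pd (eDir d i₀) q z = 0) {L : List (Coord d)}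
    (hL : L.count (some i₀) = 1) :
    ∀ z : Pt d, z.1 i₀ = a → pdList (L.map Coord.vec) q z = 0 := by
  have hperm : L.Perm (L.erase (some i₀) ++ [some i₀]) :=
    (List.perm_cons_erase (List.count_pos_iff.mp (by omega))).trans
      (List.perm_append_singleton _ _).symm
  rw [pdList_perm hq (hperm.map Coord.vec), List.map_append, pdList_append]
  exact pdList_eq_zero_of_count_eq_zero (contDiff_pd hq _) h (by simp [hL])

lemma pdList_Sop_on {K : Set (Pt d)} (hK : IsOpen K) {V : Pt d → ℝ} {q : Pt d → ℂ}
    (hq : ContDiff ℝ ∞ q) (L : List (Pt d)) (hV : ContDiffOn ℝ L.length V K) {z : Pt d}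
    (hz : z ∈ K) :
    pdList L (Sop V q) z = Complex.I * pdList (L ++ [tDir d]) q z
      + (1 / 2) * ∑ ℓ, pdList (L ++ [eDir d ℓ, eDir d ℓ]) q z
      - pdList L (fun y => (V y : ℂ) * q y) z := by
  have hA := (contDiff_const (c := Complex.I)).mul (contDiff_pd hq (tDir d))
  have hB := (contDiff_const (c := (1 / 2 : ℂ))).mul
    (ContDiff.sum (s := Finset.univ) fun ℓ _ => contDiff_pd (contDiff_pd hq (eDir d ℓ)) (eDir d ℓ))
  have hW : ContDiffOn ℝ L.length (fun y => (V y : ℂ) * q y) K :=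
    (Complex.ofRealCLM.contDiff.comp_contDiffOn hV).mul (hq.of_le ENat.LEInfty.out).contDiffOn
  change pdList L (((fun y => Complex.I * pd (tDir d) q y) +
    fun y => (1 / 2) * ∑ ℓ, pd (eDir d ℓ) (pd (eDir d ℓ) q) y) - fun y => (V y : ℂ) * q y) z = _
  have hsmooth {f : Pt d → ℂ} (hf : ContDiff ℝ ∞ f) : ContDiffOn ℝ L.length f K :=
    (hf.of_le ENat.LEInfty.out).contDiffOn
  have hAB : ContDiff ℝ ∞ ((fun y => Complex.I * pd (tDir d) q y) +
      fun y => (1 / 2) * ∑ ℓ, pd (eDir d ℓ) (pd (eDir d ℓ) q) y) := hA.add hB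
  rw [pdList_sub_on hK L (hsmooth hAB) hW hz, Pi.sub_apply,
    pdList_add_on hK L (hsmooth hA) (hsmooth hB) hz, Pi.add_apply, pdList_const_mul,
    pdList_const_mul]
  dsimp only
  rw [pdList_sum_on hK _ L (fun ℓ _ => hsmooth (contDiff_pd (contDiff_pd hq _) _)) hz]
  simp [pdList_append]

lemma pdList_mul_eq_zero {K : Set (Pt d)} (hK : IsOpen K) {W g : Pt d → ℂ} {L : List (Coord d)}
    (hW : ContDiffOn ℝ L.length W K) (hg : ContDiffOn ℝ L.length g K) {c : Pt d} (hc : c ∈ K)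
    (h : ∀ T : List (Coord d), T.Sublist L → pdList (T.map Coord.vec) g c = 0) :
    pdList (L.map Coord.vec) (fun y => W y * g y) c = 0 := by
  obtain ⟨ι, s, a, S, haS, heq⟩ := exists_pdList_mul_eq_sum hK (L.map Coord.vec) (n := 0)
    (by simpa using hW) (by simpa using hg)
  rw [show (fun y => W y * g y) = W * g from rfl, heq hc]
  refine Finset.sum_eq_zero fun i hi => ?_
  obtain ⟨T, hT, hST⟩ := List.sublist_map_iff.mp (haS i hi).2
  rw [hST, h T hT, mul_zero]

lemma pdList_eq_zero_of_Sop {p : ℕ} {K : Set (Pt d)} (hK : IsOpen K) {c : Pt d} (hc : c ∈ K)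
    {V : Pt d → ℝ} (hV : ContDiffOn ℝ (p - 2 : ℕ) V K) {q : Pt d → ℂ} (hq : ContDiff ℝ ∞ q)
    (hS : ∀ j : MI d, MI.deg j + 2 ≤ p → Dmi j (Sop V q) c = 0) {i₀ : Fin d} {k : ℕ}
    (ih : ∀ T : List (Coord d), T.length ≤ p → T.count (some i₀) ≤ k →
      pdList (T.map Coord.vec) q c = 0)
    {L : List (Coord d)} (hL : L.length ≤ p) (hk : L.count (some i₀) = k + 2) :
    pdList (L.map Coord.vec) q c = 0 := by
  set x : Coord d := some i₀
  set L' := (L.erase x).erase x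
  have hperm : L.Perm (L' ++ [x, x]) :=
    ((List.perm_cons_erase (List.count_pos_iff.mp (by omega))).trans
      ((List.perm_cons_erase (List.count_pos_iff.mp (by simp [hk]))).cons x)).trans
      (List.perm_append_comm (l₁ := [x, x]))
  have hlen : L'.length + 2 = L.length := by simpa using hperm.length_eq.symm
  have hcount : L'.count x = k := by simpa [hk] using (List.perm_iff_count.mp hperm x).symm
  have hSop := hS (MI.ofList L') (by rw [MI.deg_ofList]; omega)
  rw [Dmi_eq_pdList] at hSop
  set M := MI.toList (MI.ofList L')
  have hM : M.Perm L' := MI.toList_ofList_perm L'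
  have hext : ∀ T : List (Coord d), T.length ≤ 2 → T.count x = 0 →
      pdList (M.map Coord.vec ++ T.map Coord.vec) q c = 0 := fun T hT hTx => by
    rw [← List.map_append]
    exact ih _ (by simp [hM.length_eq]; omega) (by simp [hM.count_eq, hcount, hTx])
  have htime : pdList (M.map Coord.vec ++ [tDir d]) q c = 0 := hext [none] (by simp) (by simp [x])
  have hspace : ∀ ℓ ≠ i₀, pdList (M.map Coord.vec ++ [eDir d ℓ, eDir d ℓ]) q c = 0 :=
    fun ℓ hℓ => hext [some ℓ, some ℓ] le_rfl (by simp [x, hℓ])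
  have hVM : ContDiffOn ℝ (M.map Coord.vec).length V K :=
    hV.of_le (by simp [hM.length_eq]; omega)
  have hpot : pdList (M.map Coord.vec) (fun y => (V y : ℂ) * q y) c = 0 :=
    pdList_mul_eq_zero hK (Complex.ofRealCLM.contDiff.comp_contDiffOn (by simpa using hVM))
      (hq.of_le ENat.LEInfty.out).contDiffOn hc fun T hT =>
      ih T (by have := hT.length_le; rw [hM.length_eq] at this; omega)
        (by have := hT.count_le x; rwa [hM.count_eq, hcount] at this)
  have hnormal : pdList (M.map Coord.vec ++ [eDir d i₀, eDir d i₀]) q c =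
      pdList (L.map Coord.vec) q c := by
    rw [← pdList_perm hq (((hM.append_right _).trans hperm.symm).map Coord.vec)]
    simp [x, Coord.vec]
  rw [pdList_Sop_on hK hq _ hVM hc, htime, hpot,
    Finset.sum_eq_single i₀ (fun ℓ _ => hspace ℓ) (by simp), hnormal] at hSop
  simpa using hSop

theorem Dmi_eq_zero_of_trace_eq_zero {p : ℕ} {K : Set (Pt d)} (hK : IsOpen K) {c : Pt d}
    (hc : c ∈ K) {V : Pt d → ℝ} (hV : ContDiffOn ℝ (p - 2 : ℕ) V K) {q : Pt d → ℂ}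
    (hq : ContDiff ℝ ∞ q) (hS : ∀ j : MI d, MI.deg j + 2 ≤ p → Dmi j (Sop V q) c = 0)
    {i₀ : Fin d} (h0 : ∀ z : Pt d, z.1 i₀ = c.1 i₀ → q z = 0)
    (h1 : ∀ z : Pt d, z.1 i₀ = c.1 i₀ → pd (eDir d i₀) q z = 0)
    (j : MI d) (hj : MI.deg j ≤ p) : Dmi j q c = 0 := by
  suffices ∀ k (L : List (Coord d)), L.count (some i₀) = k → L.length ≤ p →
      pdList (L.map Coord.vec) q c = 0 by
    rw [Dmi_eq_pdList]
    exact this _ _ rfl (by rwa [MI.length_toList])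
  intro k
  induction k using Nat.strong_induction_on with
  | _ k ih =>
  intro L hk hL
  match k, hk with
  | 0, hk => exact pdList_eq_zero_of_count_eq_zero hq h0 hk c rfl
  | 1, hk => exact pdList_eq_zero_of_count_eq_one hq h1 hk c rfl
  | k + 2, hk =>
    exact pdList_eq_zero_of_Sop hK hc hV hq hS (fun T hT hTk => ih _ (by omega) T rfl hT) hL hk

end QuasiTrefftz

theorem quasiTrefftz_trace_uniqueness_general
    (d p : ℕ) (hd : 0 < d)
    (K : Set (Pt d)) (hK : IsOpen K) (cK : Pt d) (hcK : cK ∈ K)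
    (V : Pt d → ℝ) (hV : ContDiffOn ℝ (max (p - 2) 0 : ℕ) V K)
    (q : Pt d → ℂ) (hq : q ∈ QTset d p V cK)
    (hvanish : ∀ z : Pt d, z.1 ⟨0, hd⟩ = cK.1 ⟨0, hd⟩ →
      q z = 0 ∧ pd (eDir d ⟨0, hd⟩) q z = 0) :
    q = fun _ => (0 : ℂ) := by
  obtain ⟨hpoly, hS⟩ := hq
  refine QuasiTrefftz.eq_zero_of_Dmi_eq_zero hpoly cK fun j hj => ?_
  exact QuasiTrefftz.Dmi_eq_zero_of_trace_eq_zero hK hcK (by simpa using hV)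
    (QuasiTrefftz.contDiff_of_mem_polySet hpoly) hS (fun z hz => (hvanish z hz).1)
    (fun z hz => (hvanish z hz).2) j hj

/-- An element of `QT^p(K)` vanishing, together with its
`∂_{x_1}`-derivative, on the hyperplane `{x_1 = x_K^{(1)}}` is the zero polynomial. -/
theorem quasiTrefftz_trace_uniqueness
    (d p : ℕ) (hd : 0 < d) (hp : 1 ≤ p)
    (K : Set (Pt d)) (hK : IsOpen K) (cK : Pt d) (hcK : cK ∈ K)
    (V : Pt d → ℝ) (hV : ContDiffOn ℝ (max (p - 2) 0 : ℕ) V K)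
    (q : Pt d → ℂ) (hq : q ∈ QTset d p V cK)
    (hvanish : ∀ z : Pt d, z.1 ⟨0, hd⟩ = cK.1 ⟨0, hd⟩ →
      q z = 0 ∧ pd (eDir d ⟨0, hd⟩) q z = 0) :
    q = fun _ => (0 : ℂ) :=
  quasiTrefftz_trace_uniqueness_general d p hd K hK cK hcK V hV q hq hvanish

end
end
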